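/- For all integers n ≥ 1 and 1 ≤ l ≤ n, the solution of the Partial Quicksort expectation recursion is given explicitly by a(n,l) = 2n + 2(n+1)·H_n − 2(n+3−l)·H_{n+1−l} − 6l + 6, where H_j = Σ_{i=1}^j 1/i is the j-th harmonic number. -/

import Mathlib

open MeasureTheory ProbabilityTheory Filter Finset

noncomputable section

/-- The `j`-th harmonic number `H_j = Σ_{i=1}^j 1/i`. -/
def Hnum (j : ℕ) : ℝ := ∑ i ∈ Finset.range j, (1 : ℝ) / (i + 1)

/-- The expected number `a(n,l)` of comparisons of Quicksort on the fly on `n`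
distinct reals up to the output of the `l`-th smallest, defined by the
divide-and-conquer recursion
`a(n,l) = n − 1 + (1/n)·[Σ_{j=1}^l (a(j−1,j−1) + a(n−j,l−j)) + Σ_{j=l+1}^n a(j−1,l)]`
for `n ≥ 2`, `1 ≤ l ≤ n`, and `0` at the boundary cases
(`a(0,0) = a(1,0) = a(1,1) = 0`, `a(n,0) = 0`). -/
def aPQ : ℕ → ℕ → ℝ
  | n, l =>
    if h : 2 ≤ n ∧ 1 ≤ l ∧ l ≤ n then
      (n : ℝ) - 1 + (1 / n) *
        ((∑ j ∈ (Finset.Icc 1 l).attach, (aPQ (j.1 - 1) (j.1 - 1) + aPQ (n - j.1) (l - j.1)))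
          + ∑ j ∈ (Finset.Icc (l + 1) n).attach, aPQ (j.1 - 1) l)
    else 0
termination_by n l => n
decreasing_by
  · have := (Finset.mem_Icc.mp j.2); omega
  · have := (Finset.mem_Icc.mp j.2); omega
  · have := (Finset.mem_Icc.mp j.2); omega

/-! The closed form is verified against the recursion: after writing `n = l + m`, each of the
three sums in the recursion has a closed form in harmonic numbers (they reduce to
`∑_{i<k} (i + 1) H_i = k(k+1)/2 · H_k - k(k-1)/4 - k`), and the resulting identity is checked by
algebra; strong induction on `n` then identifies `a(n, l)` with the closed form. -/

lemma Hnum_succ (k : ℕ) : Hnum (k + 1) = Hnum k + 1 / ((k : ℝ) + 1) := by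
  simp [Hnum, sum_range_succ]

lemma Hnum_one : Hnum 1 = 1 := by
  simp [Hnum]

/-- The claimed value of `a(l + m, l)`; indexing by `m = n - l` avoids truncated subtraction. -/
def pqCost (l m : ℕ) : ℝ :=
  2 * ((l : ℝ) + m) + 2 * ((l : ℝ) + m + 1) * Hnum (l + m) - 2 * ((m : ℝ) + 3) * Hnum (m + 1)
    - 6 * l + 6

lemma sum_range_pqCost_diag (l : ℕ) :
    ∑ i ∈ range l, pqCost i 0 = (l : ℝ) * (l + 1) * Hnum l - (l : ℝ) * (5 * l - 1) / 2 := by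
  induction l with
  | zero => simp
  | succ l ih =>
    rw [sum_range_succ, ih, pqCost, add_zero, Hnum_succ l, zero_add, Hnum_one]
    push_cast
    field_simp
    ring

lemma sum_range_pqCost_succ_left (k m : ℕ) :
    ∑ i ∈ range k, pqCost (i + 1) m
      = ((k : ℝ) + m + 1) * (k + m + 2) * Hnum (k + m + 1)
        - (((m : ℝ) + 1) * (m + 2) + 2 * k * (m + 3)) * Hnum (m + 1)
        + (k : ℝ) * (2 * m + 3 - 5 * k) / 2 := by
  induction k with
  | zero => simp
  | succ k ih =>
    rw [sum_range_succ, ih, pqCost, show k + 1 + m + 1 = k + m + 1 + 1 by omega,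
      Hnum_succ (k + m + 1), show k + 1 + m = k + m + 1 by omega]
    push_cast
    field_simp
    ring

lemma sum_range_pqCost_right (l m : ℕ) :
    ∑ i ∈ range m, pqCost l i
      = ((l : ℝ) + m) * (l + m + 1) * Hnum (l + m) - (l : ℝ) * (l + 1) * Hnum l
        - ((m : ℝ) + 1) * (m + 4) * Hnum (m + 1) + (m : ℝ) ^ 2 + 8 * m - 5 * l * m + 4 := by
  induction m with
  | zero => simp [Hnum]
  | succ m ih =>
    rw [sum_range_succ, ih, pqCost, show l + (m + 1) = l + m + 1 by omega, Hnum_succ (l + m),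
      Hnum_succ (m + 1)]
    push_cast
    field_simp
    ring

lemma pqCost_recursion (k m : ℕ) :
    pqCost (k + 1) m = ((k + 1 : ℕ) + m : ℝ) - 1 + 1 / ((k + 1 : ℕ) + m : ℝ) *
      (∑ i ∈ range (k + 1), pqCost i 0 + ∑ i ∈ range k, pqCost (i + 1) m
        + ∑ i ∈ range m, pqCost (k + 1) i) := by
  rw [sum_range_pqCost_diag, sum_range_pqCost_succ_left, sum_range_pqCost_right, pqCost,
    show k + 1 + m = k + m + 1 by omega]
  push_cast
  field_simp
  ring

lemma aPQ_zero_right (n : ℕ) : aPQ n 0 = 0 := by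
  rw [aPQ, dif_neg (by omega)]

lemma aPQ_add_eq (l m : ℕ) (hl : 1 ≤ l) (h : 2 ≤ l + m) :
    aPQ (l + m) l = ((l : ℝ) + m) - 1 + 1 / ((l : ℝ) + m) *
      (∑ i ∈ range l, aPQ i i + ∑ i ∈ range l, aPQ (m + i) i + ∑ i ∈ range m, aPQ (l + i) l) := by
  rw [aPQ, dif_pos ⟨h, hl, by omega⟩,
    sum_attach (Icc 1 l) (fun j => aPQ (j - 1) (j - 1) + aPQ (l + m - j) (l - j)),
    sum_attach (Icc (l + 1) (l + m)) (fun j => aPQ (j - 1) l), sum_add_distrib,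
    ← Ico_add_one_right_eq_Icc, ← Ico_add_one_right_eq_Icc, sum_Ico_eq_sum_range,
    sum_Ico_eq_sum_range, sum_Ico_eq_sum_range, ← sum_range_reflect (fun i => aPQ (m + i) i)]
  push_cast
  congr 4
  · exact sum_congr rfl fun i _ => by rw [Nat.add_sub_cancel_left]
  · exact sum_congr rfl fun i hi => by rw [mem_range] at hi; congr 1 <;> omega
  · rw [Nat.add_sub_cancel_left]
  · funext i; congr 1; omega

theorem aPQ_add_eq_pqCost (l m : ℕ) (hl : 1 ≤ l) : aPQ (l + m) l = pqCost l m := by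
  induction hn : l + m using Nat.strong_induction_on generalizing l m with
  | _ n IH =>
  subst hn
  obtain ⟨k, rfl⟩ : ∃ k, l = k + 1 := ⟨l - 1, by omega⟩
  rcases Nat.lt_or_ge (k + 1 + m) 2 with h1 | h2
  · obtain ⟨rfl, rfl⟩ : k = 0 ∧ m = 0 := by omega
    rw [aPQ, dif_neg (by omega), pqCost]
    norm_num [Hnum_one]
  have diag : ∀ i ∈ range (k + 1), aPQ i i = pqCost i 0 := by
    rintro (_ | i) hi
    · rw [aPQ_zero_right, pqCost]
      norm_num [Hnum_one, Hnum]
    · simpa using IH (i + 1 + 0) (by rw [mem_range] at hi; omega) (i + 1) 0 (by omega) rfl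
  have left : ∀ i ∈ range k, aPQ (m + (i + 1)) (i + 1) = pqCost (i + 1) m := by
    intro i hi
    rw [add_comm m]
    exact IH _ (by rw [mem_range] at hi; omega) _ _ (by omega) rfl
  have right : ∀ i ∈ range m, aPQ (k + 1 + i) (k + 1) = pqCost (k + 1) i := fun i hi =>
    IH _ (by rw [mem_range] at hi; omega) _ _ hl rfl
  rw [aPQ_add_eq _ _ hl h2, sum_congr rfl diag, sum_range_succ' (fun i => aPQ (m + i) i),
    add_zero, aPQ_zero_right, add_zero, sum_congr rfl left, sum_congr rfl right, pqCost_recursion]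

theorem partialQuicksort_expected_cost (n l : ℕ) (hl : 1 ≤ l) (hln : l ≤ n) :
    aPQ n l = 2 * n + 2 * ((n : ℝ) + 1) * Hnum n
      - 2 * ((n : ℝ) + 3 - l) * Hnum (n + 1 - l) - 6 * l + 6 := by
  obtain ⟨m, rfl⟩ := Nat.exists_eq_add_of_le hln
  rw [aPQ_add_eq_pqCost l m hl, pqCost, show l + m + 1 - l = m + 1 by omega]
  push_cast
  ring

end
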